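/- Let D = (V, E) be a minimal obstruction and, for i ∈ {1,2}, let ∅ ≠ Aᵢ ⊆ E be such that D[Aᵢ] is a forest and D/Aᵢ is acyclic. Suppose there is a directed cut of D induced by a partition (X, V∖X) separating A₁ from A₂, i.e., with A₁ ⊆ E(D[X]) and A₂ ⊆ E(D[V∖X]). Then there exists a directed bond of D containing A₁ ∪ A₂. -/

import Mathlib

open Relation

/-! ## Finite directed multigraphs -/

/-- A finite directed multigraph: finite vertex and edge types together with
tail and head maps (loops and parallel/anti-parallel edges are allowed). -/
structure MultiDigraph : Type 1 where
  V : Type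
  E : Type
  [fv : Fintype V]
  [fe : Fintype E]
  [dv : DecidableEq V]
  [de : DecidableEq E]
  tail : E → V
  head : E → V

attribute [instance] MultiDigraph.fv MultiDigraph.fe MultiDigraph.dv MultiDigraph.de

namespace MultiDigraph

variable (D : MultiDigraph)

/-- The set of edges crossing the partition `(X, Xᶜ)` of the vertex set. -/
def cutAt (X : Set D.V) : Set D.E :=
  {e | (D.tail e ∈ X ∧ D.head e ∉ X) ∨ (D.tail e ∉ X ∧ D.head e ∈ X)}

/-- A cut: a nonempty set of edges of the form `cutAt X`. -/
def IsCut (S : Set D.E) : Prop := S.Nonempty ∧ ∃ X : Set D.V, S = D.cutAt X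

/-- A bond: a cut containing no other cut properly. -/
def IsBond (S : Set D.E) : Prop := D.IsCut S ∧ ∀ S', D.IsCut S' → S' ⊆ S → S' = S

/-- A directed cut: a nonempty cut `cutAt X` such that no edge enters `X`. -/
def IsDirectedCut (S : Set D.E) : Prop :=
  S.Nonempty ∧ ∃ X : Set D.V, S = D.cutAt X ∧ ∀ e : D.E, ¬(D.tail e ∉ X ∧ D.head e ∈ X)

/-- A directed bond: a bond which is a directed cut. -/
def IsDirectedBond (S : Set D.E) : Prop := D.IsBond S ∧ D.IsDirectedCut S

/-- An odd dijoin: an edge set meeting every directed bond an odd number of times. -/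
def IsOddDijoin (J : Set D.E) : Prop := ∀ S : Set D.E, D.IsDirectedBond S → Odd (J ∩ S).ncard

def HasOddDijoin : Prop := ∃ J : Set D.E, D.IsOddDijoin J

/-- One-step relation used for weak connectivity of the subgraph spanned by `A`:
`x` and `y` are joined by an edge of `A`. -/
def touchRel (A : Set D.E) : D.V → D.V → Prop :=
  fun x y => ∃ e ∈ A, D.tail e = x ∧ D.head e = y

/-- Contraction `D/A`: delete the edges of `A` and identify each weak component of `D[A]`. -/
noncomputable def contract (A : Set D.E) : MultiDigraph :=
  letI s := EqvGen.setoid (D.touchRel A)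
  { V := Quotient s
    E := {e : D.E // e ∉ A}
    fv := Fintype.ofFinite _
    fe := Fintype.ofFinite _
    dv := Classical.decEq _
    de := Classical.decEq _
    tail := fun e => Quotient.mk s (D.tail e.1)
    head := fun e => Quotient.mk s (D.head e.1) }

/-- A step of a directed walk. -/
def dstep : D.V → D.V → Prop := fun a b => ∃ e : D.E, D.tail e = a ∧ D.head e = b

/-- A step of a directed walk avoiding a fixed edge `e₀`. -/
def dstepAvoiding (e₀ : D.E) : D.V → D.V → Prop :=
  fun a b => ∃ e : D.E, e ≠ e₀ ∧ D.tail e = a ∧ D.head e = b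

/-- An edge is deletable if it is not a loop and there is a directed path from its tail
to its head not using it. -/
def Deletable (e : D.E) : Prop :=
  D.tail e ≠ D.head e ∧ ReflTransGen (D.dstepAvoiding e) (D.tail e) (D.head e)

/-- Deleting one edge. -/
noncomputable def deleteEdge (e : D.E) : MultiDigraph where
  V := D.V
  E := {f : D.E // f ≠ e}
  fv := D.fv
  fe := Fintype.ofFinite _
  dv := D.dv
  de := Classical.decEq _
  tail := fun f => D.tail f.1
  head := fun f => D.head f.1

/-- An isolated vertex. -/
def Isolated (v : D.V) : Prop := ∀ e : D.E, D.tail e ≠ v ∧ D.head e ≠ v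

/-- Deleting an isolated vertex. -/
noncomputable def deleteVertex (v : D.V) (h : D.Isolated v) : MultiDigraph where
  V := {u : D.V // u ≠ v}
  E := D.E
  fv := Fintype.ofFinite _
  fe := D.fe
  dv := Classical.decEq _
  de := D.de
  tail := fun e => ⟨D.tail e, (h e).1⟩
  head := fun e => ⟨D.head e, (h e).2⟩

/-- A digraph is acyclic if it has no directed cycle. -/
def Acyclic : Prop := ∀ a b : D.V, D.dstep a b → ¬ ReflTransGen D.dstep b a

/-- A step of an undirected walk. -/
def ustep : D.V → D.V → Prop :=
  fun a b => ∃ e : D.E, (D.tail e = a ∧ D.head e = b) ∨ (D.tail e = b ∧ D.head e = a)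

/-- Weak connectivity. -/
def WeaklyConnected : Prop := ∀ a b : D.V, ReflTransGen D.ustep a b

/-- A step of an undirected walk avoiding the vertex `v`. -/
def ustepAvoiding (v : D.V) : D.V → D.V → Prop :=
  fun a b => a ≠ v ∧ b ≠ v ∧ D.ustep a b

/-- The underlying multigraph is 2-vertex-connected. -/
def TwoConnected : Prop :=
  3 ≤ Fintype.card D.V ∧ D.WeaklyConnected ∧
    ∀ v a b : D.V, a ≠ v → b ≠ v → ReflTransGen (D.ustepAvoiding v) a b

/-- `D` is an oriented graph: no loops and no pair of parallel or anti-parallel edges. -/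
def Oriented : Prop :=
  (∀ e : D.E, D.tail e ≠ D.head e) ∧
    ∀ e f : D.E, e ≠ f → ({D.tail e, D.head e} : Set D.V) ≠ {D.tail f, D.head f}

/-- `D` is transitively reduced: no edge of `D` is deletable. -/
def TransitivelyReduced : Prop := ∀ e : D.E, ¬ D.Deletable e

end MultiDigraph

/-! ## Digraph isomorphism -/

/-- An isomorphism of directed multigraphs. -/
structure DigraphIso (D₁ D₂ : MultiDigraph) where
  vmap : D₁.V ≃ D₂.V
  emap : D₁.E ≃ D₂.E
  tail_eq : ∀ e, D₂.tail (emap e) = vmap (D₁.tail e)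
  head_eq : ∀ e, D₂.head (emap e) = vmap (D₁.head e)

def IsIsomorphic (D₁ D₂ : MultiDigraph) : Prop := Nonempty (DigraphIso D₁ D₂)

/-! ## Cut minors -/

/-- A single cut-minor step: contraction of an edge, deletion of a deletable edge, or
deletion of an isolated vertex. -/
inductive CutMinorStep : MultiDigraph → MultiDigraph → Prop
  | contractEdge (D : MultiDigraph) (e : D.E) : CutMinorStep (D.contract {e}) D
  | delEdge (D : MultiDigraph) (e : D.E) (h : D.Deletable e) : CutMinorStep (D.deleteEdge e) D
  | delVertex (D : MultiDigraph) (v : D.V) (h : D.Isolated v) :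
      CutMinorStep (D.deleteVertex v h) D

/-- `D₁` is a cut minor of `D₂`. -/
def IsCutMinor (D₁ D₂ : MultiDigraph) : Prop := ReflTransGen CutMinorStep D₁ D₂

/-- A proper cut minor: a cut minor which is not isomorphic to the digraph itself. -/
def IsProperCutMinor (D₁ D₂ : MultiDigraph) : Prop :=
  IsCutMinor D₁ D₂ ∧ ¬ IsIsomorphic D₁ D₂

/-- A minimal obstruction: a digraph without an odd dijoin all of whose proper cut minors
have an odd dijoin. -/
def MinimalObstruction (D : MultiDigraph) : Prop :=
  ¬ D.HasOddDijoin ∧ ∀ D' : MultiDigraph, IsProperCutMinor D' D → D'.HasOddDijoin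

/-! ## Cycles and forests in the underlying multigraph -/

namespace MultiDigraph

variable (D : MultiDigraph)

/-- `X : D.E → SignType` is the signed incidence vector of a cycle of the underlying
multigraph of `D`, signs recording forward/backward edges of a cyclic traversal. -/
def IsSignedCycle (X : D.E → SignType) : Prop :=
  ∃ n : ℕ, 0 < n ∧ ∃ (v : ZMod n → D.V) (ed : ZMod n → D.E) (dir : ZMod n → Bool),
    Function.Injective v ∧ Function.Injective ed ∧
    (∀ i, (dir i = true → D.tail (ed i) = v i ∧ D.head (ed i) = v (i + 1)) ∧
      (dir i = false → D.tail (ed i) = v (i + 1) ∧ D.head (ed i) = v i)) ∧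
    (∀ i, X (ed i) = if dir i then 1 else -1) ∧
    (∀ f, (∀ i, ed i ≠ f) → X f = 0)

/-- The sub-multigraph spanned by `A` is a forest: it contains no cycle. -/
def IsForestOn (A : Set D.E) : Prop :=
  ¬ ∃ X : D.E → SignType, D.IsSignedCycle X ∧ ∀ e : D.E, X e ≠ 0 → e ∈ A

end MultiDigraph

/-! ## The cut space over 𝔽₂ -/

/-- Indicator vector of a set, over `𝔽₂ = ZMod 2`. -/
noncomputable def eindicator {α : Type} (C : Set α) : α → ZMod 2 := C.indicator 1

namespace MultiDigraph

variable (D : MultiDigraph)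

/-- The cut space of (the underlying multigraph of) `D`: the `𝔽₂`-span of the
indicator vectors of the bonds. -/
noncomputable def cutSpace : Submodule (ZMod 2) (D.E → ZMod 2) :=
  Submodule.span (ZMod 2) (eindicator '' {S : Set D.E | D.IsBond S})

/-- `ℬ` is a basis of the cut space of `D` (a family of edge sets whose indicator
vectors are linearly independent and span the cut space). -/
noncomputable def IsCutSpaceBasis (ℬ : Set (Set D.E)) : Prop :=
  LinearIndependent (ZMod 2) (fun S : ℬ => eindicator (S : Set D.E)) ∧
    Submodule.span (ZMod 2) (eindicator '' ℬ) = D.cutSpace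

end MultiDigraph

/-! ## Special digraphs -/

/-- The digraph `𝒟(n₀,n₁,n₂)`: three layers, with all edges from layer 0 to layer 1 and
from layer 1 to layer 2. -/
def layeredD (n₀ n₁ n₂ : ℕ) : MultiDigraph where
  V := (Fin n₀ ⊕ Fin n₁) ⊕ Fin n₂
  E := (Fin n₀ × Fin n₁) ⊕ (Fin n₁ × Fin n₂)
  tail := Sum.elim (fun p => Sum.inl (Sum.inl p.1)) (fun p => Sum.inl (Sum.inr p.1))
  head := Sum.elim (fun p => Sum.inl (Sum.inr p.2)) (fun p => Sum.inr p.2)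

/-- `K⃗_{m,n}`: the complete bipartite graph oriented from the class of size `m` to the
class of size `n`. -/
def oneDirK (m n : ℕ) : MultiDigraph where
  V := Fin m ⊕ Fin n
  E := Fin m × Fin n
  tail := fun p => Sum.inl p.1
  head := fun p => Sum.inr p.2

/-- A diamond: two hubs and `n` further vertices, each of which is either a source with its
two edges going to the hubs, or a sink with its two edges coming from the hubs
(`σ i = true` meaning `xᵢ` is a source). -/
def diamondD (n : ℕ) (σ : Fin n → Bool) : MultiDigraph where
  V := Fin n ⊕ Fin 2
  E := Fin n × Fin 2
  tail := fun p => if σ p.1 then Sum.inl p.1 else Sum.inr p.2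
  head := fun p => if σ p.1 then Sum.inr p.2 else Sum.inl p.1

/-- The bicycle `C⃡_k`: the cycle of length `k` with every edge replaced by a pair of
anti-parallel directed edges. -/
noncomputable def bicycle (k : ℕ) (hk : k ≠ 0) : MultiDigraph :=
  haveI : NeZero k := ⟨hk⟩
  { V := ZMod k
    E := ZMod k × Bool
    fv := inferInstance
    fe := inferInstance
    dv := inferInstance
    de := inferInstance
    tail := fun p => if p.2 then p.1 else p.1 + 1
    head := fun p => if p.2 then p.1 + 1 else p.1 }

/-- An odd diamond. -/
def IsOddDiamond (D : MultiDigraph) : Prop :=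
  ∃ (n : ℕ) (σ : Fin n → Bool), 3 ≤ n ∧ Odd (n + 2) ∧ IsIsomorphic D (diamondD n σ)

/-- An odd one-direction. -/
def IsOddOneDirection (D : MultiDigraph) : Prop :=
  ∃ m n : ℕ, 2 ≤ m ∧ 2 ≤ n ∧ Odd (m + n) ∧ IsIsomorphic D (oneDirK m n)

/-! ## Symmetric difference of a family of sets -/

/-- The symmetric difference of a finite family of sets. -/
def symmDiffFam {α : Type} {k : ℕ} (F : Fin k → Set α) : Set α :=
  {a | Odd ({i : Fin k | a ∈ F i}).ncard}

/-! ## Oriented matroids -/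

/-- Raw data of an oriented matroid: a finite ground set together with a collection of
signed subsets (encoded as functions to `SignType`). -/
structure PreOM : Type 1 where
  E : Type
  [fe : Fintype E]
  [de : DecidableEq E]
  circuits : Set (E → SignType)

attribute [instance] PreOM.fe PreOM.de

/-- The support of a signed set. -/
def sgnSupport {α : Type} (X : α → SignType) : Set α := {e | X e ≠ 0}

namespace PreOM

/-- The oriented matroid axioms for the collection of signed circuits. -/
def IsOM (M : PreOM) : Prop :=
  (0 : M.E → SignType) ∉ M.circuits ∧
  (∀ X ∈ M.circuits, -X ∈ M.circuits) ∧
  (∀ X ∈ M.circuits, ∀ Y ∈ M.circuits, sgnSupport X ⊆ sgnSupport Y → X = Y ∨ X = -Y) ∧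
  ∀ X ∈ M.circuits, ∀ Y ∈ M.circuits, X ≠ -Y → ∀ e : M.E, X e = 1 → Y e = -1 →
    ∃ Z ∈ M.circuits, (∀ f, Z f = 1 → f ≠ e ∧ (X f = 1 ∨ Y f = 1)) ∧
      ∀ f, Z f = -1 → f ≠ e ∧ (X f = -1 ∨ Y f = -1)

/-- The circuits of the underlying matroid: supports of signed circuits. -/
def UCircuits (M : PreOM) : Set (Set M.E) :=
  {C | ∃ X ∈ M.circuits, C = sgnSupport X}

/-- A directed circuit: the support of a signed circuit with empty negative part. -/
def IsDirectedCircuit (M : PreOM) (C : Set M.E) : Prop :=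
  ∃ X ∈ M.circuits, (∀ e, X e ≠ -1) ∧ C = {e | X e = 1}

/-- Independent sets of the underlying matroid. -/
def Indep (M : PreOM) (I : Set M.E) : Prop := ∀ C ∈ M.UCircuits, ¬ C ⊆ I

/-- Bases of the underlying matroid. -/
def IsBase (M : PreOM) (B : Set M.E) : Prop :=
  M.Indep B ∧ ∀ B', M.Indep B' → B ⊆ B' → B' = B

/-- Cocircuits of the underlying matroid: minimal sets meeting every base. -/
def IsCocircuit (M : PreOM) (S : Set M.E) : Prop :=
  (∀ B, M.IsBase B → (S ∩ B).Nonempty) ∧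
    ∀ S' : Set M.E, S' ⊂ S → ¬ ∀ B, M.IsBase B → (S' ∩ B).Nonempty

/-- Signed cocircuits: signed sets supported on a cocircuit and orthogonal to every
signed circuit. -/
def IsSignedCocircuit (M : PreOM) (Y : M.E → SignType) : Prop :=
  M.IsCocircuit (sgnSupport Y) ∧
    ∀ X ∈ M.circuits,
      ((∃ e, (Y e = 1 ∧ X e = 1) ∨ (Y e = -1 ∧ X e = -1)) ↔
        (∃ e, (Y e = 1 ∧ X e = -1) ∨ (Y e = -1 ∧ X e = 1)))

/-- An element `e` is butterfly-contractible if there is a cocircuit `S` with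
`(S \ {e}, {e})` a signed cocircuit. -/
def ButterflyContractible (M : PreOM) (e : M.E) : Prop :=
  ∃ Y : M.E → SignType, M.IsSignedCocircuit Y ∧ Y e = -1 ∧ ∀ f, f ≠ e → Y f ≠ -1

/-- Deletion of a set of elements. -/
noncomputable def deleteSet (M : PreOM) (A : Set M.E) : PreOM where
  E := {f : M.E // f ∉ A}
  fe := Fintype.ofFinite _
  de := Classical.decEq _
  circuits := {X : {f : M.E // f ∉ A} → SignType |
    ∃ X' ∈ M.circuits, (∀ a ∈ A, X' a = 0) ∧ ∀ f : {f : M.E // f ∉ A}, X f = X' f.1}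

/-- Contraction of a single element: signed circuits are the support-minimal nonempty
traces of signed circuits. -/
noncomputable def contractElem (M : PreOM) (e : M.E) : PreOM where
  E := {f : M.E // f ≠ e}
  fe := Fintype.ofFinite _
  de := Classical.decEq _
  circuits := {X : {f : M.E // f ≠ e} → SignType |
    X ≠ 0 ∧ ∃ X' ∈ M.circuits, (∀ f : {f : M.E // f ≠ e}, X f = X' f.1) ∧
      ¬ ∃ Z ∈ M.circuits, (sgnSupport Z \ {e}) ⊂ (sgnSupport X' \ {e})}

/-- Isomorphism of (pre-)oriented matroids. -/
def Iso (M N : PreOM) : Prop :=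
  ∃ σ : M.E ≃ N.E, ∀ X : N.E → SignType, X ∈ N.circuits ↔ (X ∘ σ) ∈ M.circuits

/-- A minimal dependent set of a vector configuration. -/
def IsMinimalDep {F : Type} [Field F] {n : ℕ} {E : Type} (φ : E → (Fin n → F))
    (C : Set E) : Prop :=
  ¬ LinearIndependent F (fun e : C => φ e.1) ∧
    ∀ C' : Set E, C' ⊂ C → LinearIndependent F (fun e : C' => φ e.1)

/-- The underlying matroid is regular: representable over every field. -/
def Regular (M : PreOM) : Prop :=
  ∀ (F : Type) [Field F], ∃ (n : ℕ) (φ : M.E → (Fin n → F)),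
    ∀ C : Set M.E, C ∈ M.UCircuits ↔ IsMinimalDep φ C

/-- `M` is non-even: its underlying matroid is regular and some set of elements meets
every directed circuit an odd number of times. -/
def NonEven (M : PreOM) : Prop :=
  M.Regular ∧ ∃ J : Set M.E, ∀ C : Set M.E, M.IsDirectedCircuit C → Odd (J ∩ C).ncard

/-- Totally cyclic: every element lies in a directed circuit. -/
def TotallyCyclic (M : PreOM) : Prop :=
  ∀ e : M.E, ∃ C : Set M.E, M.IsDirectedCircuit C ∧ e ∈ C

/-- Coindependent set: contains no cocircuit. -/
def Coindependent (M : PreOM) (A : Set M.E) : Prop :=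
  ∀ S : Set M.E, M.IsCocircuit S → ¬ S ⊆ A

/-- The circuit space of the underlying (binary) matroid, over `𝔽₂`. -/
noncomputable def circuitSpace (M : PreOM) : Submodule (ZMod 2) (M.E → ZMod 2) :=
  Submodule.span (ZMod 2) (eindicator '' M.UCircuits)

/-- A directed circuit basis: a family of directed circuits whose indicator vectors form a
basis of the circuit space. -/
noncomputable def IsDirectedCircuitBasis (M : PreOM) (ℬ : Set (Set M.E)) : Prop :=
  (∀ C ∈ ℬ, M.IsDirectedCircuit C) ∧
    LinearIndependent (ZMod 2) (fun C : ℬ => eindicator (C : Set M.E)) ∧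
    Submodule.span (ZMod 2) (eindicator '' ℬ) = M.circuitSpace

end PreOM

/-! ## GB-minors -/

/-- A single GB-minor step: deletion of an element, or contraction of a
butterfly-contractible element. -/
inductive GBStep : PreOM → PreOM → Prop
  | del (M : PreOM) (e : M.E) : GBStep (M.deleteSet {e}) M
  | con (M : PreOM) (e : M.E) (h : M.ButterflyContractible e) : GBStep (M.contractElem e) M

/-- `N` is a GB-minor of `M`. -/
def IsGBMinor (N M : PreOM) : Prop := ReflTransGen GBStep N M

/-! ## Oriented matroids from digraphs -/

/-- The oriented bond matroid `M*(D)` of a digraph `D`: signed circuits are the signed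
incidence vectors of the bonds of `D`. -/
def bondOM (D : MultiDigraph) : PreOM where
  E := D.E
  circuits := {X : D.E → SignType | ∃ W : Set D.V, D.IsBond (D.cutAt W) ∧
    ∀ e : D.E, (X e = 1 ↔ (D.tail e ∈ W ∧ D.head e ∉ W)) ∧
      (X e = -1 ↔ (D.head e ∈ W ∧ D.tail e ∉ W))}

/-- The oriented graphic matroid `M(D)` of a digraph `D`: signed circuits are the signed
incidence vectors of the cycles of the underlying multigraph of `D`. -/
def cycleOM (D : MultiDigraph) : PreOM where
  E := D.E
  circuits := {X : D.E → SignType | D.IsSignedCycle X}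

/-!
Suppose no directed bond contains `A₁ ∪ A₂`. Over `𝔽₂`, an odd dijoin is the same thing as a
linear functional on `𝔽₂^E` equal to `1` on every directed bond. Contracting a non-loop edge `a`
gives a proper cut minor, and its odd dijoin yields a functional `φ_a` equal to `1` on the
directed bonds avoiding `a`.

The forest and acyclicity hypotheses imply that no walk which runs forward along arbitrary edges
and backward along edges of some `B ⊆ A₁ ∪ A₂` leads from the head of an edge `e ∉ B` back to its
tail. This makes every cut avoiding `B` a sum of directed bonds avoiding `B`. Hence the span of
the directed bonds avoiding `A₁` meets the span of those avoiding `A₂` inside the span of those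
avoiding `A₁ ∪ A₂`, where `φ_{a₁}` and `φ_{a₂}` agree, so the two glue to one functional `ψ`.
A directed bond `δ(W)` missing some `a ∈ A₁ ∪ A₂` is the sum of the cuts `δ(Wᶜ ∩ X)` and
`δ(Wᶜ ∩ Xᶜ)`, which avoid `A₂ ∪ {a}` and `A₁ ∪ {a}` respectively, so they lie in spans of
directed bonds on which `ψ` agrees with `φ_a`. Thus `ψ` is `1` on every directed bond, and `D`
has an odd dijoin.
-/

theorem Module.Dual.exists_eqOn_of_eqOn_inf {K V : Type*} [DivisionRing K] [AddCommGroup V]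
    [Module K V] {U₁ U₂ : Submodule K V} {φ₁ φ₂ : Module.Dual K V}
    (h : Set.EqOn φ₁ φ₂ ↑(U₁ ⊓ U₂)) :
    ∃ ψ : Module.Dual K V, Set.EqOn ψ φ₁ U₁ ∧ Set.EqOn ψ φ₂ U₂ := by
  have hagree : ∀ (x : (φ₁.toPMap U₁).domain) (y : (φ₂.toPMap U₂).domain),
      (x : V) = y → φ₁.toPMap U₁ x = φ₂.toPMap U₂ y := by
    rintro ⟨x, hx⟩ ⟨y, hy⟩ (rfl : x = y)
    exact h ⟨hx, hy⟩
  set f := (φ₁.toPMap U₁).sup (φ₂.toPMap U₂) hagree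
  obtain ⟨ψ, hψ⟩ := LinearMap.exists_extend f.toFun
  have hψf : ∀ x : f.domain, ψ x = f x := fun x => LinearMap.congr_fun hψ x
  refine ⟨ψ, fun x hx => ?_, fun x hx => ?_⟩
  · obtain ⟨hdom, hval⟩ := LinearPMap.left_le_sup _ _ hagree
    exact (hψf ⟨x, hdom hx⟩).trans (hval (x := ⟨x, hx⟩) rfl).symm
  · obtain ⟨hdom, hval⟩ := LinearPMap.right_le_sup _ _ hagree
    exact (hψf ⟨x, hdom hx⟩).trans (hval (x := ⟨x, hx⟩) rfl).symm

theorem Relation.ReflTransGen.mono_on_walk {α : Type*} {r s : α → α → Prop} {a b : α}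
    (h : ∀ x y, ReflTransGen r a x → r x y → ReflTransGen r y b → s x y)
    (hab : ReflTransGen r a b) : ReflTransGen s a b := by
  induction hab with
  | refl => exact .refl
  | tail hac hcb ih =>
    exact .tail (ih fun x y hx hxy hy => h x y hx hxy (hy.tail hcb)) (h _ _ hac hcb .refl)

theorem Relation.ReflTransGen.of_forall_or_eq_start {α : Type*} {r s : α → α → Prop} {a b : α}
    (h : ∀ x y, r x y → s x y ∨ y = a) (hab : ReflTransGen r a b) : ReflTransGen s a b := by
  induction hab with
  | refl => exact .refl
  | tail _ hcb ih => exact (h _ _ hcb).elim ih.tail fun h => h ▸ .refl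

section Parity

variable {α : Type}

theorem eindicator_apply (S : Set α) (x : α) [Decidable (x ∈ S)] :
    eindicator S x = if x ∈ S then 1 else 0 := by
  simp [eindicator, Set.indicator_apply]

theorem eindicator_injective : Function.Injective (eindicator : Set α → α → ZMod 2) := by
  classical
  intro s t h
  ext x
  have := congrFun h x
  by_cases hs : x ∈ s <;> by_cases ht : x ∈ t <;> simp_all [eindicator_apply]

theorem eindicator_empty : eindicator (∅ : Set α) = 0 :=
  Set.indicator_empty _

theorem ssubset_of_eindicator_eq_add {S T U : Set α}
    (h : eindicator S = eindicator T + eindicator U) (hT : T ⊆ S) (hU : U.Nonempty) : T ⊂ S := by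
  refine hT.ssubset_of_ne fun hTS => hU.ne_empty (eindicator_injective ?_)
  rw [hTS] at h
  simpa [eindicator_empty] using h

theorem eindicator_diff_of_subset {s t : Set α} (h : t ⊆ s) :
    eindicator (s \ t) = eindicator s + eindicator t := by
  classical
  ext x; by_cases hs : x ∈ s <;> by_cases ht : x ∈ t <;> simp [eindicator_apply, hs, ht] <;>
    first | rfl | exact absurd (h ht) hs

variable (s t : Set α)

theorem eindicator_symmDiff : eindicator (symmDiff s t) = eindicator s + eindicator t := by
  classical
  ext x; by_cases hs : x ∈ s <;> by_cases ht : x ∈ t <;>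
    simp [eindicator_apply, Set.mem_symmDiff, hs, ht]; rfl

theorem eindicator_inter_add_inter_compl :
    eindicator (s ∩ t) + eindicator (s ∩ tᶜ) = eindicator s := by
  classical
  ext x; by_cases hs : x ∈ s <;> by_cases ht : x ∈ t <;> simp [eindicator_apply, hs, ht]

theorem eindicator_union_add_union_compl :
    eindicator (s ∪ t) + eindicator (s ∪ tᶜ) = 1 + eindicator s := by
  classical
  ext x; by_cases hs : x ∈ s <;> by_cases ht : x ∈ t <;> simp [eindicator_apply, hs, ht]

theorem eindicator_union :
    eindicator (s ∪ t) = eindicator s + eindicator t + eindicator (s ∩ t) := by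
  classical
  ext x; by_cases hs : x ∈ s <;> by_cases ht : x ∈ t <;> simp [eindicator_apply, hs, ht]; rfl

theorem eindicator_union_compl :
    eindicator (s ∪ tᶜ) = 1 + eindicator t + eindicator (s ∩ t) := by
  classical
  ext x; by_cases hs : x ∈ s <;> by_cases ht : x ∈ t <;> simp [eindicator_apply, hs, ht] <;> rfl

variable [Fintype α]

noncomputable def parity (J : Set α) : Module.Dual (ZMod 2) (α → ZMod 2) :=
  ∑ e ∈ J.toFinite.toFinset, LinearMap.proj e

theorem parity_apply (J : Set α) (v : α → ZMod 2) :
    parity J v = ∑ e ∈ J.toFinite.toFinset, v e := by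
  simp [parity]

theorem parity_eindicator (J S : Set α) : parity J (eindicator S) = ((J ∩ S).ncard : ZMod 2) := by
  classical
  rw [parity_apply, Set.ncard_eq_toFinset_card _ (J.toFinite.inter_of_left S)]
  simp only [eindicator_apply, Finset.sum_boole, Set.toFinite_toFinset, Set.toFinset_inter]
  congr 2
  ext
  simp

theorem exists_parity_eq (φ : Module.Dual (ZMod 2) (α → ZMod 2)) : ∃ J, parity J = φ := by
  classical
  refine ⟨{e | φ (Pi.single e 1) = 1}, LinearMap.pi_ext fun e x => ?_⟩
  rw [parity_apply, Finset.sum_pi_single',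
    show Pi.single e x = x • Pi.single e (1 : ZMod 2) by simp [← Pi.single_smul], map_smul]
  obtain hc | hc : φ (Pi.single e 1) = 0 ∨ φ (Pi.single e 1) = 1 := by
    generalize φ (Pi.single e 1) = c; decide +revert
  all_goals simp [hc]

end Parity

namespace MultiDigraph

variable {D : MultiDigraph}

section Cuts

variable (D) in
noncomputable def coboundary : (D.V → ZMod 2) →ₗ[ZMod 2] (D.E → ZMod 2) :=
  LinearMap.funLeft (ZMod 2) (ZMod 2) D.tail + LinearMap.funLeft (ZMod 2) (ZMod 2) D.head

theorem coboundary_one : D.coboundary 1 = 0 := by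
  ext e; simp [coboundary]; rfl

theorem eindicator_cutAt (Y : Set D.V) :
    eindicator (D.cutAt Y) = D.coboundary (eindicator Y) := by
  classical
  ext e
  by_cases ht : D.tail e ∈ Y <;> by_cases hh : D.head e ∈ Y <;>
    simp [coboundary, cutAt, eindicator_apply, ht, hh]; rfl

theorem notMem_cutAt_iff {Y : Set D.V} {e : D.E} :
    e ∉ D.cutAt Y ↔ (D.tail e ∈ Y ↔ D.head e ∈ Y) := by
  simp only [cutAt, Set.mem_ofPred_eq]; tauto

theorem cutAt_compl (Y : Set D.V) : D.cutAt Yᶜ = D.cutAt Y := by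
  ext e; simp only [cutAt, Set.mem_ofPred_eq, Set.mem_compl_iff, not_not]; tauto

theorem cutAt_inter_subset (Y Z : Set D.V) : D.cutAt (Y ∩ Z) ⊆ D.cutAt Y ∪ D.cutAt Z := by
  intro e; simp only [cutAt, Set.mem_union, Set.mem_ofPred_eq, Set.mem_inter_iff]; tauto

theorem cutAt_union_subset (Y Z : Set D.V) : D.cutAt (Y ∪ Z) ⊆ D.cutAt Y ∪ D.cutAt Z := by
  intro e; simp only [cutAt, Set.mem_union, Set.mem_ofPred_eq]; tauto

theorem cutAt_diff_subset (Y Z : Set D.V) : D.cutAt (Y \ Z) ⊆ D.cutAt Y ∪ D.cutAt Z := by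
  intro e; simp only [cutAt, Set.mem_union, Set.mem_ofPred_eq, Set.mem_sdiff]; tauto

theorem cutAt_symmDiff_subset (Y Z : Set D.V) :
    D.cutAt (symmDiff Y Z) ⊆ D.cutAt Y ∪ D.cutAt Z := by
  intro e; simp only [cutAt, Set.mem_union, Set.mem_ofPred_eq, Set.mem_symmDiff]; tauto

variable (Y Z : Set D.V)

theorem eindicator_cutAt_inter_add_inter_compl :
    eindicator (D.cutAt (Y ∩ Z)) + eindicator (D.cutAt (Y ∩ Zᶜ)) = eindicator (D.cutAt Y) := by
  simp only [eindicator_cutAt, ← map_add, eindicator_inter_add_inter_compl]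

theorem eindicator_cutAt_union_add_union_compl :
    eindicator (D.cutAt (Y ∪ Z)) + eindicator (D.cutAt (Y ∪ Zᶜ)) = eindicator (D.cutAt Y) := by
  rw [eindicator_cutAt, eindicator_cutAt, eindicator_cutAt, ← map_add,
    eindicator_union_add_union_compl, map_add, coboundary_one, zero_add]

theorem eindicator_cutAt_union : eindicator (D.cutAt (Y ∪ Z)) =
    eindicator (D.cutAt Y) + eindicator (D.cutAt Z) + eindicator (D.cutAt (Y ∩ Z)) := by
  simp only [eindicator_cutAt, ← map_add, eindicator_union]

theorem eindicator_cutAt_union_compl : eindicator (D.cutAt (Y ∪ Zᶜ)) =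
    eindicator (D.cutAt Z) + eindicator (D.cutAt (Y ∩ Z)) := by
  simp only [eindicator_cutAt, eindicator_union_compl, map_add, coboundary_one, zero_add]

end Cuts

section DirectedCuts

variable (D) in
def IsInClosed (Y : Set D.V) : Prop := ∀ e : D.E, D.head e ∈ Y → D.tail e ∈ Y

variable (D) in
noncomputable def dibondSpan (B : Set D.E) : Submodule (ZMod 2) (D.E → ZMod 2) :=
  Submodule.span (ZMod 2) (eindicator '' {β | D.IsDirectedBond β ∧ Disjoint β B})

variable {Y Z : Set D.V}

theorem IsInClosed.isDirectedCut (hY : D.IsInClosed Y) (hne : (D.cutAt Y).Nonempty) :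
    D.IsDirectedCut (D.cutAt Y) :=
  ⟨hne, Y, rfl, fun e ⟨ht, hh⟩ => ht (hY e hh)⟩

theorem IsInClosed.inter (hY : D.IsInClosed Y) (hZY : D.cutAt Z ⊆ D.cutAt Y) :
    D.IsInClosed (Y ∩ Z) := by
  intro e he
  have := @hZY e; have := hY e
  simp only [cutAt, Set.mem_ofPred_eq, Set.mem_inter_iff] at *; tauto

theorem IsInClosed.union (hY : D.IsInClosed Y) (hZY : D.cutAt Z ⊆ D.cutAt Y) :
    D.IsInClosed (Y ∪ Z) := by
  intro e he
  have := @hZY e; have := hY e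
  simp only [cutAt, Set.mem_ofPred_eq, Set.mem_union] at *; tauto

theorem cutAt_inter_subset_of_subset (hZY : D.cutAt Z ⊆ D.cutAt Y) :
    D.cutAt (Y ∩ Z) ⊆ D.cutAt Y :=
  (cutAt_inter_subset Y Z).trans (Set.union_subset subset_rfl hZY)

theorem cutAt_union_subset_of_subset (hZY : D.cutAt Z ⊆ D.cutAt Y) :
    D.cutAt (Y ∪ Z) ⊆ D.cutAt Y :=
  (cutAt_union_subset Y Z).trans (Set.union_subset subset_rfl hZY)

theorem IsInClosed.exists_split_of_cutAt_inter_eq_empty (hY : D.IsInClosed Y)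
    (hZY : D.cutAt Z ⊂ D.cutAt Y) (hZ : (D.cutAt Z).Nonempty) (h₀ : D.cutAt (Y ∩ Z) = ∅) :
    ∃ P₁ P₂ : Set D.V,
      (D.IsInClosed P₁ ∧ D.cutAt P₁ ⊆ D.cutAt Y ∧ (D.cutAt P₁).Nonempty) ∧
      (D.IsInClosed P₂ ∧ D.cutAt P₂ ⊆ D.cutAt Y ∧ (D.cutAt P₂).Nonempty) ∧
      eindicator (D.cutAt Y) = eindicator (D.cutAt P₁) + eindicator (D.cutAt P₂) := by
  rw [← eindicator_injective.eq_iff, eindicator_empty] at h₀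
  have h₁ : D.cutAt (Y ∪ Z) = D.cutAt Y \ D.cutAt Z := eindicator_injective <| by
    rw [eindicator_cutAt_union, h₀, add_zero, eindicator_diff_of_subset hZY.subset]
  have h₂ : D.cutAt (Y ∪ Zᶜ) = D.cutAt Z := eindicator_injective <| by
    rw [eindicator_cutAt_union_compl, h₀, add_zero]
  have hZY' : D.cutAt Zᶜ ⊆ D.cutAt Y := (cutAt_compl Z).symm ▸ hZY.subset
  exact ⟨_, _,
    ⟨hY.union hZY.subset, cutAt_union_subset_of_subset hZY.subset,
      h₁ ▸ Set.sdiff_nonempty.2 hZY.not_subset⟩,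
    ⟨hY.union hZY', cutAt_union_subset_of_subset hZY', h₂ ▸ hZ⟩,
    (eindicator_cutAt_union_add_union_compl Y Z).symm⟩

/-- Of the two decompositions `δY = δ(Y ∩ Z) + δ(Y ∩ Zᶜ) = δ(Y ∪ Z) + δ(Y ∪ Zᶜ)` over `𝔽₂`,
one has two nonempty summands. -/
theorem IsInClosed.exists_split (hY : D.IsInClosed Y) (hZY : D.cutAt Z ⊂ D.cutAt Y)
    (hZ : (D.cutAt Z).Nonempty) :
    ∃ P₁ P₂ : Set D.V,
      (D.IsInClosed P₁ ∧ D.cutAt P₁ ⊆ D.cutAt Y ∧ (D.cutAt P₁).Nonempty) ∧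
      (D.IsInClosed P₂ ∧ D.cutAt P₂ ⊆ D.cutAt Y ∧ (D.cutAt P₂).Nonempty) ∧
      eindicator (D.cutAt Y) = eindicator (D.cutAt P₁) + eindicator (D.cutAt P₂) := by
  have hZY' : D.cutAt Zᶜ ⊂ D.cutAt Y := (cutAt_compl Z).symm ▸ hZY
  by_cases h₁ : D.cutAt (Y ∩ Z) = ∅
  · exact hY.exists_split_of_cutAt_inter_eq_empty hZY hZ h₁
  by_cases h₂ : D.cutAt (Y ∩ Zᶜ) = ∅
  · exact hY.exists_split_of_cutAt_inter_eq_empty hZY' ((cutAt_compl Z).symm ▸ hZ) h₂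
  exact ⟨_, _,
    ⟨hY.inter hZY.subset, cutAt_inter_subset_of_subset hZY.subset,
      Set.nonempty_iff_ne_empty.2 h₁⟩,
    ⟨hY.inter hZY'.subset, cutAt_inter_subset_of_subset hZY'.subset,
      Set.nonempty_iff_ne_empty.2 h₂⟩,
    (eindicator_cutAt_inter_add_inter_compl Y Z).symm⟩

theorem IsInClosed.eindicator_cutAt_mem_dibondSpan {B : Set D.E} (hY : D.IsInClosed Y)
    (hB : Disjoint (D.cutAt Y) B) : eindicator (D.cutAt Y) ∈ D.dibondSpan B := by
  induction hn : (D.cutAt Y).ncard using Nat.strong_induction_on generalizing Y with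
  | _ n ih =>
  rcases (D.cutAt Y).eq_empty_or_nonempty with hY₀ | hYne
  · rw [hY₀, eindicator_empty]
    exact zero_mem _
  by_cases hbond : D.IsBond (D.cutAt Y)
  · exact Submodule.subset_span ⟨_, ⟨⟨hbond, hY.isDirectedCut hYne⟩, hB⟩, rfl⟩
  simp only [IsBond, not_and, not_forall] at hbond
  obtain ⟨_, ⟨hZ, Z, rfl⟩, hZY, hZY'⟩ := hbond ⟨hYne, Y, rfl⟩
  obtain ⟨P₁, P₂, ⟨hP₁, hsub₁, hne₁⟩, ⟨hP₂, hsub₂, hne₂⟩, hsum⟩ :=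
    hY.exists_split (hZY.ssubset_of_ne hZY') hZ
  have hlt₁ := Set.ncard_lt_ncard (ssubset_of_eindicator_eq_add hsum hsub₁ hne₂)
  have hlt₂ :=
    Set.ncard_lt_ncard (ssubset_of_eindicator_eq_add (hsum.trans (add_comm _ _)) hsub₂ hne₁)
  rw [hsum]
  exact add_mem (ih _ (hn ▸ hlt₁) hP₁ (hB.mono_left hsub₁) rfl)
    (ih _ (hn ▸ hlt₂) hP₂ (hB.mono_left hsub₂) rfl)

end DirectedCuts

section MixedWalks

variable {B : Set D.E}

theorem mem_iff_of_eqvGen {S : Set D.V} (hS : Disjoint (D.cutAt S) B) {x y : D.V}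
    (h : EqvGen (D.touchRel B) x y) : x ∈ S ↔ y ∈ S := by
  induction h with
  | rel x y hxy =>
    obtain ⟨f, hf, rfl, rfl⟩ := hxy
    exact notMem_cutAt_iff.1 (Set.disjoint_right.1 hS hf)
  | refl => rfl
  | symm _ _ _ ih => exact ih.symm
  | trans _ _ _ _ _ ih₁ ih₂ => exact ih₁.trans ih₂

variable (D) in
def MixedStepVia (B : Set D.E) (f : D.E) (x y : D.V) : Prop :=
  (D.tail f = x ∧ D.head f = y) ∨ (f ∈ B ∧ D.tail f = y ∧ D.head f = x)

variable (D) in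
def MixedStep (B : Set D.E) (x y : D.V) : Prop := ∃ f, D.MixedStepVia B f x y

variable (D) in
def MixedAcyclic (B : Set D.E) : Prop :=
  ∀ e ∉ B, ¬ ReflTransGen (D.MixedStep B) (D.head e) (D.tail e)

theorem mixedStep_of_edge (f : D.E) : D.MixedStep B (D.tail f) (D.head f) :=
  ⟨f, .inl ⟨rfl, rfl⟩⟩

theorem mixedStep_of_mem {f : D.E} (hf : f ∈ B) : D.MixedStep B (D.head f) (D.tail f) :=
  ⟨f, .inr ⟨hf, rfl, rfl⟩⟩

theorem reflTransGen_mixedStep_of_eqvGen {x y : D.V} (h : EqvGen (D.touchRel B) x y) :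
    ReflTransGen (D.MixedStep B) x y := by
  suffices ReflTransGen (D.MixedStep B) x y ∧ ReflTransGen (D.MixedStep B) y x from this.1
  induction h with
  | rel x y hxy =>
    obtain ⟨f, hf, rfl, rfl⟩ := hxy
    exact ⟨.single (mixedStep_of_edge f), .single (mixedStep_of_mem hf)⟩
  | refl => exact ⟨.refl, .refl⟩
  | symm _ _ _ ih => exact ih.symm
  | trans _ _ _ _ _ ih₁ ih₂ => exact ⟨ih₁.1.trans ih₂.1, ih₂.2.trans ih₁.2⟩

theorem eindicator_cutAt_mem_dibondSpan_of_mixedStep {L : Set D.V}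
    (hL : ∀ x y, D.MixedStep B x y → y ∈ L → x ∈ L) :
    eindicator (D.cutAt L) ∈ D.dibondSpan B := by
  refine IsInClosed.eindicator_cutAt_mem_dibondSpan (fun e => hL _ _ (mixedStep_of_edge e)) ?_
  exact Set.disjoint_right.2 fun f hf => notMem_cutAt_iff.2
    ⟨hL _ _ (mixedStep_of_mem hf), hL _ _ (mixedStep_of_edge f)⟩

theorem MixedAcyclic.eindicator_cutAt_mem_dibondSpan (hB : D.MixedAcyclic B) {Y : Set D.V}
    (hY : Disjoint (D.cutAt Y) B) : eindicator (D.cutAt Y) ∈ D.dibondSpan B := by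
  induction hn : Y.ncard using Nat.strong_induction_on generalizing Y with
  | _ n ih =>
  rcases Y.eq_empty_or_nonempty with rfl | ⟨v, hv⟩
  · simp [cutAt, eindicator_empty]
  -- the class `C` of `v` in `D[B]` is `L \ (L \ C)`, where `L` and `L \ C` are both closed
  -- under mixed predecessors
  set C := {w | EqvGen (D.touchRel B) w v}
  set L := {w | ReflTransGen (D.MixedStep B) w v}
  have hvC : v ∈ C := EqvGen.refl v
  have hC : Disjoint (D.cutAt C) B := Set.disjoint_right.2 fun f hf => by
    have h : EqvGen (D.touchRel B) (D.tail f) (D.head f) := .rel _ _ ⟨f, hf, rfl, rfl⟩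
    exact notMem_cutAt_iff.2 ⟨fun ht => .trans _ _ _ (.symm _ _ h) ht, fun hh => .trans _ _ _ h hh⟩
  have hCY : C ⊆ Y := fun w hw => (mem_iff_of_eqvGen hY hw).2 hv
  have hCL : C ⊆ L := fun w hw => reflTransGen_mixedStep_of_eqvGen hw
  have hL : eindicator (D.cutAt L) ∈ D.dibondSpan B :=
    eindicator_cutAt_mem_dibondSpan_of_mixedStep fun x y hxy hy => .head hxy hy
  have hLC : eindicator (D.cutAt (L \ C)) ∈ D.dibondSpan B := by
    refine eindicator_cutAt_mem_dibondSpan_of_mixedStep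
      fun x y hxy ⟨hyL, hyC⟩ => ⟨.head hxy hyL, fun hxC => ?_⟩
    obtain ⟨f, ⟨rfl, rfl⟩ | ⟨hf, rfl, rfl⟩⟩ := hxy
    · by_cases hf : f ∈ B
      · exact hyC (.trans _ _ _ (.symm _ _ (.rel _ _ ⟨f, hf, rfl, rfl⟩)) hxC)
      · exact hB f hf (hyL.trans (reflTransGen_mixedStep_of_eqvGen (.symm _ _ hxC)))
    · exact hyC (.trans _ _ _ (.rel _ _ ⟨f, hf, rfl, rfl⟩) hxC)
  have hYC : eindicator (D.cutAt (Y \ C)) ∈ D.dibondSpan B :=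
    ih _ (hn ▸ Set.ncard_lt_ncard ⟨Set.sdiff_subset, fun h => (h hv).2 hvC⟩)
      ((Set.disjoint_union_left.2 ⟨hY, hC⟩).mono_left (cutAt_diff_subset Y C)) rfl
  rw [eindicator_cutAt, eindicator_diff_of_subset hCL, map_add, ← eindicator_cutAt,
    ← eindicator_cutAt] at hLC
  rw [eindicator_cutAt, eindicator_diff_of_subset hCY, map_add, ← eindicator_cutAt,
    ← eindicator_cutAt] at hYC
  exact (Submodule.add_mem_iff_left _ ((Submodule.add_mem_iff_right _ hL).1 hLC)).1 hYC

end MixedWalks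

section Forests

variable (D) in
def Joins (f : D.E) (x y : D.V) : Prop :=
  (D.tail f = x ∧ D.head f = y) ∨ (D.tail f = y ∧ D.head f = x)

theorem Joins.symm {f : D.E} {x y : D.V} (h : D.Joins f x y) : D.Joins f y x :=
  Or.symm h

theorem exists_isSignedCycle {n : ℕ} (hn : 0 < n) {v : ZMod n → D.V} {ed : ZMod n → D.E}
    (hv : Function.Injective v) (hed : Function.Injective ed)
    (hjoin : ∀ i, D.Joins (ed i) (v i) (v (i + 1))) :
    ∃ X, D.IsSignedCycle X ∧ ∀ f, X f ≠ 0 → f ∈ Set.range ed := by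
  classical
  let dir : ZMod n → Bool := fun i => decide (D.tail (ed i) = v i)
  refine ⟨Function.extend ed (fun i => if dir i then 1 else -1) 0,
    ⟨n, hn, v, ed, dir, hv, hed, fun i => ⟨fun hi => ?_, fun hi => ?_⟩,
      fun i => hed.extend_apply _ _ i,
      fun f hf => Function.extend_apply' _ _ _ (by simpa using hf)⟩,
    fun f hf => by_contra fun h => hf (Function.extend_apply' _ _ _ h)⟩
  · have ht : D.tail (ed i) = v i := by simpa [dir] using hi
    rcases hjoin i with h | h
    · exact h
    · exact ⟨ht, h.2.trans (ht.symm.trans h.1)⟩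
  · have ht : D.tail (ed i) ≠ v i := by simpa [dir] using hi
    exact (hjoin i).resolve_left fun h => ht h.1

/-- The path given by the walk, closed up by `e`, would be a cycle in `A`. -/
theorem IsForestOn.not_reflTransGen {A : Set D.E} (hA : D.IsForestOn A) {e : D.E} (he : e ∈ A) :
    ¬ ReflTransGen (fun x y => ∃ f ∈ A \ {e}, D.Joins f x y) (D.head e) (D.tail e) := by
  intro hw
  classical
  let G := SimpleGraph.fromRel fun x y => ∃ f ∈ A \ {e}, D.Joins f x y
  have hreach : G.Reachable (D.head e) (D.tail e) := by
    rw [SimpleGraph.reachable_iff_reflTransGen]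
    refine ReflTransGen.lift' id (fun x y hxy => ?_) _ _ hw
    by_cases hxy' : x = y
    · exact hxy' ▸ .refl
    · exact .single ((SimpleGraph.fromRel_adj _ _ _).2 ⟨hxy', .inl hxy⟩)
  obtain ⟨p, hp⟩ := hreach.exists_isPath
  have hstep : ∀ i < p.length, ∃ f ∈ A \ {e}, D.Joins f (p.getVert i) (p.getVert (i + 1)) := by
    intro i hi
    obtain ⟨-, h | ⟨f, hf, hj⟩⟩ := (SimpleGraph.fromRel_adj _ _ _).1 (p.adj_getVert_succ hi)
    · exact h
    · exact ⟨f, hf, hj.symm⟩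
  have : Nonempty D.E := ⟨e⟩
  choose! F hFA hFj using hstep
  let k := p.length
  let v : Fin (k + 1) → D.V := fun i => p.getVert i
  let ed : Fin (k + 1) → D.E := fun i => if (i : ℕ) < k then F i else e
  have hvinj : ∀ i j : ℕ, i ≤ k → j ≤ k → p.getVert i = p.getVert j → i = j :=
    fun i j hi hj h => hp.getVert_injOn hi hj h
  have hv : Function.Injective v := fun i j h =>
    Fin.ext (hvinj _ _ (Nat.lt_succ_iff.1 i.2) (Nat.lt_succ_iff.1 j.2) h)
  have hed : Function.Injective ed := by
    intro i j h
    have hi' := Nat.lt_succ_iff.1 i.2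
    have hj' := Nat.lt_succ_iff.1 j.2
    simp only [ed] at h
    split_ifs at h with hi hj hj
    -- `F i = F j` joins both `vᵢ, vᵢ₊₁` and `vⱼ, vⱼ₊₁`, and the path has distinct vertices
    · rcases hFj i hi with ⟨h₁, h₂⟩ | ⟨h₁, h₂⟩ <;> rcases hFj j hj with ⟨h₃, h₄⟩ | ⟨h₃, h₄⟩ <;>
        rw [h] at h₁ h₂ <;>
        have := hvinj _ _ (by omega) (by omega) (h₁.symm.trans h₃) <;>
        have := hvinj _ _ (by omega) (by omega) (h₂.symm.trans h₄) <;>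
        exact Fin.ext (by omega)
    · exact absurd h (hFA i hi).2
    · exact absurd h.symm (hFA j hj).2
    · exact Fin.ext (by omega)
  have hjoin : ∀ i : Fin (k + 1), D.Joins (ed i) (v i) (v (i + 1)) := by
    intro i
    by_cases hi : (i : ℕ) < k
    · have hlast : i ≠ Fin.last k := fun h => by simp [h] at hi
      simpa [ed, v, hi, Fin.val_add_one, hlast] using hFj i hi
    · obtain rfl : i = Fin.last k := Fin.ext (by have := i.2; simp; omega)
      simp only [ed, v, k, Fin.val_last, lt_irrefl, if_false, Fin.last_add_one, Fin.val_zero,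
        p.getVert_length, p.getVert_zero]
      exact Or.inl ⟨rfl, rfl⟩
  obtain ⟨X, hX, hXA⟩ := exists_isSignedCycle (n := k + 1) k.succ_pos hv hed hjoin
  refine hA ⟨X, hX, fun f hf => ?_⟩
  obtain ⟨i, rfl⟩ := hXA f hf
  simp only [ed]
  split_ifs with hi
  exacts [(hFA _ hi).1, he]

theorem IsForestOn.tail_ne_head {A : Set D.E} (hA : D.IsForestOn A) {e : D.E} (he : e ∈ A) :
    D.tail e ≠ D.head e :=
  fun h => hA.not_reflTransGen he (h ▸ .refl)

end Forests

section Contraction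

variable {A B : Set D.E}

variable (D) in
def toContract (A : Set D.E) (v : D.V) : (D.contract A).V :=
  Quotient.mk (EqvGen.setoid (D.touchRel A)) v

theorem toContract_eq_iff {x y : D.V} :
    D.toContract A x = D.toContract A y ↔ EqvGen (D.touchRel A) x y :=
  Quotient.eq

theorem toContract_tail_eq_head {f : D.E} (hf : f ∈ A) :
    D.toContract A (D.tail f) = D.toContract A (D.head f) :=
  toContract_eq_iff.2 (.rel _ _ ⟨f, hf, rfl, rfl⟩)

theorem dstep_contract {f : D.E} (hf : f ∉ A) :
    (D.contract A).dstep (D.toContract A (D.tail f)) (D.toContract A (D.head f)) :=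
  ⟨⟨f, hf⟩, rfl, rfl⟩

theorem reflTransGen_contract_of_mixedStep (hB : B ⊆ A) {x y : D.V}
    (h : ReflTransGen (D.MixedStep B) x y) :
    ReflTransGen (D.contract A).dstep (D.toContract A x) (D.toContract A y) := by
  refine ReflTransGen.lift' _ (fun x y ⟨f, hf⟩ => ?_) _ _ h
  rcases hf with ⟨rfl, rfl⟩ | ⟨hf, rfl, rfl⟩
  · by_cases hfA : f ∈ A
    · rw [Function.onFun, toContract_tail_eq_head hfA]
    · exact .single (dstep_contract hfA)
  · rw [Function.onFun, toContract_tail_eq_head (hB hf)]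

/-- A forward step along an edge outside `A` would lie on a directed cycle of `D/A`. -/
theorem reflTransGen_mixedStepVia_of_contract (hB : B ⊆ A) (hac : (D.contract A).Acyclic)
    {a b : D.V} (h : ReflTransGen (D.MixedStep B) a b)
    (hba : ReflTransGen (D.contract A).dstep (D.toContract A b) (D.toContract A a)) :
    ReflTransGen (fun x y => ∃ f ∈ A, D.MixedStepVia B f x y) a b := by
  induction h using ReflTransGen.head_induction_on with
  | refl => exact .refl
  | @head x c hstep hrest ih =>
    obtain ⟨f, hf⟩ := hstep
    have hfA : f ∈ A := by
      by_contra hfA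
      rcases hf with ⟨rfl, rfl⟩ | ⟨hfB, -⟩
      · exact hac _ _ (dstep_contract hfA) ((reflTransGen_contract_of_mixedStep hB hrest).trans hba)
      · exact hfA (hB hfB)
    have heq : D.toContract A x = D.toContract A c := by
      rcases hf with ⟨rfl, rfl⟩ | ⟨-, rfl, rfl⟩
      exacts [toContract_tail_eq_head hfA, (toContract_tail_eq_head hfA).symm]
    exact .head ⟨f, hfA, hf⟩ (ih (heq ▸ hba))

theorem IsForestOn.mixedAcyclic (hA : D.IsForestOn A) (hac : (D.contract A).Acyclic)
    (hB : B ⊆ A) : D.MixedAcyclic B := by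
  intro e heB hw
  have hproj := reflTransGen_contract_of_mixedStep hB hw
  by_cases heA : e ∈ A
  swap
  · exact hac _ _ (dstep_contract heA) hproj
  have hwA := reflTransGen_mixedStepVia_of_contract hB hac hw
    (toContract_tail_eq_head heA ▸ .refl)
  refine hA.not_reflTransGen heA (hwA.of_forall_or_eq_start fun x y ⟨f, hfA, hf⟩ => ?_)
  by_cases hfe : f = e
  · subst hfe
    rcases hf with ⟨-, rfl⟩ | ⟨hfB, -⟩
    exacts [.inr rfl, absurd hfB heB]
  · exact .inl ⟨f, ⟨hfA, hfe⟩, Or.imp id And.right hf⟩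

/-- A mixed walk cannot enter `X`, so it stays inside `X` or inside `Xᶜ`, where its backward
steps use edges of `A₁` or of `A₂` respectively. -/
theorem mixedAcyclic_of_subset_union {A₁ A₂ : Set D.E} {X : Set D.V}
    (hf₁ : D.IsForestOn A₁) (hf₂ : D.IsForestOn A₂)
    (hac₁ : (D.contract A₁).Acyclic) (hac₂ : (D.contract A₂).Acyclic) (hX : D.IsInClosed X)
    (hA₁ : ∀ e ∈ A₁, D.tail e ∈ X ∧ D.head e ∈ X) (hA₂ : ∀ e ∈ A₂, D.tail e ∉ X ∧ D.head e ∉ X)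
    (hB : B ⊆ A₁ ∪ A₂) : D.MixedAcyclic B := by
  have hstep : ∀ x y, D.MixedStep B x y → y ∈ X → x ∈ X := by
    rintro x y ⟨f, ⟨rfl, rfl⟩ | ⟨hf, rfl, rfl⟩⟩ hy
    · exact hX f hy
    · rcases hB hf with h | h
      exacts [(hA₁ f h).2, absurd hy (hA₂ f h).1]
  have hback : ∀ x y, ReflTransGen (D.MixedStep B) x y → y ∈ X → x ∈ X := by
    intro x y h hy
    induction h using ReflTransGen.head_induction_on with
    | refl => exact hy
    | head hxc _ ih => exact hstep _ _ hxc ih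
  intro e heB hw
  by_cases hhe : D.head e ∈ X
  · refine hf₁.mixedAcyclic hac₁ Set.inter_subset_right e (fun h => heB h.1)
      (hw.mono_on_walk ?_)
    rintro x y - ⟨f, hf⟩ hyt
    have hy := hback _ _ hyt (hX e hhe)
    exact ⟨f, hf.imp_right fun ⟨hfB, hft, hfh⟩ =>
      ⟨⟨hfB, (hB hfB).resolve_right fun h => (hA₂ f h).1 (hft ▸ hy)⟩, hft, hfh⟩⟩
  · refine hf₂.mixedAcyclic hac₂ Set.inter_subset_right e (fun h => heB h.1)
      (hw.mono_on_walk ?_)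
    rintro x y hhx ⟨f, hf⟩ -
    have hx : x ∉ X := fun hx => hhe (hback _ _ hhx hx)
    exact ⟨f, hf.imp_right fun ⟨hfB, hft, hfh⟩ =>
      ⟨⟨hfB, (hB hfB).resolve_left fun h => hx (hfh ▸ (hA₁ f h).2)⟩, hft, hfh⟩⟩

end Contraction

section CutMinors

variable {A : Set D.E}

theorem preimage_image_toContract {W : Set D.V} (hW : Disjoint (D.cutAt W) A) :
    D.toContract A ⁻¹' (D.toContract A '' W) = W := by
  ext x
  exact ⟨fun ⟨w, hw, hwx⟩ => (mem_iff_of_eqvGen hW (toContract_eq_iff.1 hwx)).1 hw,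
    fun hx => ⟨x, hx, rfl⟩⟩

theorem cutAt_contract (Z : Set (D.contract A).V) :
    (D.contract A).cutAt Z = Subtype.val ⁻¹' D.cutAt (D.toContract A ⁻¹' Z) :=
  rfl

theorem disjoint_cutAt_preimage_toContract (Z : Set (D.contract A).V) :
    Disjoint (D.cutAt (D.toContract A ⁻¹' Z)) A :=
  Set.disjoint_right.2 fun f hf => notMem_cutAt_iff.2 <| by
    simp only [Set.mem_preimage, toContract_tail_eq_head hf]

theorem IsDirectedBond.contract {β : Set D.E} (hβ : D.IsDirectedBond β) (hβA : Disjoint β A) :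
    (D.contract A).IsDirectedBond (Subtype.val ⁻¹' β) := by
  obtain ⟨⟨-, hmin⟩, ⟨b, hb⟩, W, rfl, hW⟩ := hβ
  have hcut : (D.contract A).cutAt (D.toContract A '' W) = Subtype.val ⁻¹' D.cutAt W := by
    rw [cutAt_contract, preimage_image_toContract hβA]
  have hne : (Subtype.val ⁻¹' D.cutAt W : Set (D.contract A).E).Nonempty :=
    ⟨⟨b, Set.disjoint_left.1 hβA hb⟩, hb⟩
  refine ⟨⟨⟨hne, _, hcut.symm⟩, ?_⟩, hne, _, hcut.symm, fun g ⟨ht, hh⟩ => hW g.1 ⟨?_, ?_⟩⟩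
  · rintro _ ⟨⟨g, hg⟩, Z, rfl⟩ hsub
    have hZ : D.cutAt (D.toContract A ⁻¹' Z) = D.cutAt W := by
      refine hmin _ ⟨⟨g.1, hg⟩, _, rfl⟩ fun e he => ?_
      exact hsub (a := ⟨e, Set.disjoint_left.1 (disjoint_cutAt_preimage_toContract Z) he⟩) he
    rw [cutAt_contract, hZ]
    rfl
  · rwa [← preimage_image_toContract hβA]
  · rwa [← preimage_image_toContract hβA]

theorem not_isIsomorphic_contract_singleton {a : D.E} (ha : D.tail a ≠ D.head a) :
    ¬ IsIsomorphic (D.contract {a}) D := by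
  rintro ⟨φ⟩
  have hbij := (Fintype.bijective_iff_surjective_and_card (D.toContract {a})).2
    ⟨Quotient.mk_surjective, (Fintype.card_congr φ.vmap).symm⟩
  exact ha (hbij.1 (toContract_tail_eq_head rfl))

theorem _root_.MinimalObstruction.exists_odd_inter (h : MinimalObstruction D) {a : D.E}
    (ha : D.tail a ≠ D.head a) :
    ∃ J : Set D.E, ∀ β, D.IsDirectedBond β → a ∉ β → Odd (J ∩ β).ncard := by
  obtain ⟨J, hJ⟩ := h.2 _ ⟨.single (.contractEdge D a), not_isIsomorphic_contract_singleton ha⟩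
  refine ⟨Subtype.val '' J, fun β hβ haβ => ?_⟩
  have himage : Subtype.val '' J ∩ β = Subtype.val '' (J ∩ Subtype.val ⁻¹' β) :=
    (Set.image_inter_preimage _ _ _).symm
  rw [himage, Set.ncard_image_of_injective _ Subtype.val_injective]
  exact hJ _ (hβ.contract (Set.disjoint_singleton_right.2 haβ))

end CutMinors

section DibondSpans

variable {B B₁ B₂ : Set D.E}

theorem exists_eq_eindicator_cutAt_of_mem_dibondSpan {v : D.E → ZMod 2}
    (hv : v ∈ D.dibondSpan B) : ∃ Y, v = eindicator (D.cutAt Y) ∧ Disjoint (D.cutAt Y) B := by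
  induction hv using Submodule.span_induction with
  | mem _ h =>
    obtain ⟨β, ⟨⟨-, -, W, rfl, -⟩, hdisj⟩, rfl⟩ := h
    exact ⟨W, rfl, hdisj⟩
  | zero => exact ⟨∅, by simp [cutAt, eindicator_empty]⟩
  | add _ _ _ _ h₁ h₂ =>
    obtain ⟨Y, rfl, hY⟩ := h₁
    obtain ⟨Z, rfl, hZ⟩ := h₂
    refine ⟨symmDiff Y Z, ?_,
      (Set.disjoint_union_left.2 ⟨hY, hZ⟩).mono_left (cutAt_symmDiff_subset Y Z)⟩
    rw [eindicator_cutAt, eindicator_cutAt, eindicator_cutAt, ← map_add, eindicator_symmDiff]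
  | smul c _ _ h =>
    obtain ⟨Y, rfl, hY⟩ := h
    obtain rfl | rfl : c = 0 ∨ c = 1 := by decide +revert
    · exact ⟨∅, by simp [cutAt, eindicator_empty]⟩
    · exact ⟨Y, one_smul _ _, hY⟩

theorem dibondSpan_inf_le (hB : D.MixedAcyclic (B₁ ∪ B₂)) :
    D.dibondSpan B₁ ⊓ D.dibondSpan B₂ ≤ D.dibondSpan (B₁ ∪ B₂) := by
  rintro v ⟨h₁, h₂⟩
  obtain ⟨Y, rfl, hY⟩ := exists_eq_eindicator_cutAt_of_mem_dibondSpan h₁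
  obtain ⟨Z, hYZ, hZ⟩ := exists_eq_eindicator_cutAt_of_mem_dibondSpan h₂
  rw [← eindicator_injective hYZ] at hZ
  exact hB.eindicator_cutAt_mem_dibondSpan (Set.disjoint_union_right.2 ⟨hY, hZ⟩)

variable (D) in
def OddOnDibondsAvoiding (φ : Module.Dual (ZMod 2) (D.E → ZMod 2)) (B : Set D.E) : Prop :=
  ∀ β, D.IsDirectedBond β → Disjoint β B → φ (eindicator β) = 1

variable {φ ψ : Module.Dual (ZMod 2) (D.E → ZMod 2)}

theorem OddOnDibondsAvoiding.mono (hφ : D.OddOnDibondsAvoiding φ B₁) (h : B₁ ⊆ B₂) :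
    D.OddOnDibondsAvoiding φ B₂ :=
  fun β hβ hdisj => hφ β hβ (hdisj.mono_right h)

theorem OddOnDibondsAvoiding.of_eqOn (hφ : D.OddOnDibondsAvoiding φ B)
    (h : Set.EqOn ψ φ (D.dibondSpan B)) : D.OddOnDibondsAvoiding ψ B :=
  fun β hβ hdisj => (h (Submodule.subset_span ⟨β, ⟨hβ, hdisj⟩, rfl⟩)).trans (hφ β hβ hdisj)

theorem dibondSpan_le_eqLocus (hφ : D.OddOnDibondsAvoiding φ B)
    (hψ : D.OddOnDibondsAvoiding ψ B) : D.dibondSpan B ≤ LinearMap.eqLocus φ ψ :=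
  Submodule.span_le.2 <| by
    rintro _ ⟨β, ⟨hβ, hdisj⟩, rfl⟩
    exact (hφ β hβ hdisj).trans (hψ β hβ hdisj).symm

theorem hasOddDijoin_of_oddOnDibondsAvoiding_empty (hψ : D.OddOnDibondsAvoiding ψ ∅) :
    D.HasOddDijoin := by
  obtain ⟨J, rfl⟩ := exists_parity_eq ψ
  refine ⟨J, fun S hS => ?_⟩
  rw [← ZMod.natCast_eq_one_iff_odd, ← parity_eindicator]
  exact hψ S hS (Set.disjoint_empty _)

theorem _root_.MinimalObstruction.exists_oddOnDibondsAvoiding (h : MinimalObstruction D)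
    {a : D.E} (ha : D.tail a ≠ D.head a) : ∃ φ, D.OddOnDibondsAvoiding φ {a} := by
  obtain ⟨J, hJ⟩ := h.exists_odd_inter ha
  refine ⟨parity J, fun β hβ hdisj => ?_⟩
  rw [parity_eindicator, ZMod.natCast_eq_one_iff_odd]
  exact hJ β hβ (Set.disjoint_singleton_right.1 hdisj)

theorem _root_.MinimalObstruction.exists_oddOnDibondsAvoiding_of_mixedAcyclic
    {A₁ A₂ : Set D.E} (h : MinimalObstruction D) (hA : D.MixedAcyclic (A₁ ∪ A₂)) {a₁ a₂ : D.E}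
    (ha₁ : a₁ ∈ A₁) (ha₂ : a₂ ∈ A₂) (hl₁ : D.tail a₁ ≠ D.head a₁)
    (hl₂ : D.tail a₂ ≠ D.head a₂) :
    ∃ ψ, D.OddOnDibondsAvoiding ψ A₁ ∧ D.OddOnDibondsAvoiding ψ A₂ := by
  obtain ⟨φ₁, hφ₁⟩ := h.exists_oddOnDibondsAvoiding hl₁
  obtain ⟨φ₂, hφ₂⟩ := h.exists_oddOnDibondsAvoiding hl₂
  have hφ₁₂ : Set.EqOn φ₁ φ₂ ↑(D.dibondSpan A₁ ⊓ D.dibondSpan A₂) := fun v hv =>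
    dibondSpan_le_eqLocus (hφ₁.mono (by simp [ha₁])) (hφ₂.mono (by simp [ha₂]))
      (dibondSpan_inf_le hA hv)
  obtain ⟨ψ, hψ₁, hψ₂⟩ := Module.Dual.exists_eqOn_of_eqOn_inf hφ₁₂
  exact ⟨ψ, (hφ₁.mono (by simpa using ha₁)).of_eqOn hψ₁,
    (hφ₂.mono (by simpa using ha₂)).of_eqOn hψ₂⟩

theorem eindicator_mem_dibondSpan_sup {A₁ A₂ : Set D.E} {X : Set D.V}
    (hA₁ : ∀ e ∈ A₁, D.tail e ∈ X ∧ D.head e ∈ X) (hA₂ : ∀ e ∈ A₂, D.tail e ∉ X ∧ D.head e ∉ X)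
    (hmix : ∀ B ⊆ A₁ ∪ A₂, D.MixedAcyclic B) {β : Set D.E} (hβ : D.IsDirectedBond β) {a : D.E}
    (ha : a ∈ A₁ ∪ A₂) (haβ : a ∉ β) :
    eindicator β ∈ D.dibondSpan (A₁ ∪ {a}) ⊔ D.dibondSpan (A₂ ∪ {a}) := by
  obtain ⟨-, -, W, rfl, -⟩ := hβ
  have haX : a ∉ D.cutAt X := notMem_cutAt_iff.2 <| ha.elim
    (fun h => iff_of_true (hA₁ a h).1 (hA₁ a h).2) (fun h => iff_of_false (hA₂ a h).1 (hA₂ a h).2)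
  have haW : a ∉ D.cutAt Wᶜ := cutAt_compl W ▸ haβ
  rw [← cutAt_compl, ← eindicator_cutAt_inter_add_inter_compl Wᶜ X]
  refine add_mem (Submodule.mem_sup_right ((hmix _ ?_).eindicator_cutAt_mem_dibondSpan ?_))
    (Submodule.mem_sup_left ((hmix _ ?_).eindicator_cutAt_mem_dibondSpan ?_))
  · exact Set.union_subset Set.subset_union_right (Set.singleton_subset_iff.2 ha)
  · refine Set.disjoint_union_right.2 ⟨Set.disjoint_right.2 fun f hf => ?_,
      Set.disjoint_singleton_right.2 fun h => (cutAt_inter_subset _ _ h).elim haW haX⟩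
    exact notMem_cutAt_iff.2 (iff_of_false (fun h => (hA₂ f hf).1 h.2) (fun h => (hA₂ f hf).2 h.2))
  · exact Set.union_subset Set.subset_union_left (Set.singleton_subset_iff.2 ha)
  · refine Set.disjoint_union_right.2 ⟨Set.disjoint_right.2 fun f hf => ?_,
      Set.disjoint_singleton_right.2 fun h =>
        (cutAt_inter_subset _ _ h).elim haW (cutAt_compl X ▸ haX)⟩
    exact notMem_cutAt_iff.2 (iff_of_false (fun h => h.2 (hA₁ f hf).1) (fun h => h.2 (hA₁ f hf).2))

end DibondSpans

end MultiDigraph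

theorem stmt13_general (D : MultiDigraph) (h : MinimalObstruction D)
    (A₁ A₂ : Set D.E) (h₁ : A₁.Nonempty) (h₂ : A₂.Nonempty)
    (hf₁ : D.IsForestOn A₁) (hf₂ : D.IsForestOn A₂)
    (hac₁ : (D.contract A₁).Acyclic) (hac₂ : (D.contract A₂).Acyclic)
    (X : Set D.V)
    (hdircut : ∀ e : D.E, ¬(D.tail e ∉ X ∧ D.head e ∈ X))
    (hA₁ : ∀ e ∈ A₁, D.tail e ∈ X ∧ D.head e ∈ X)
    (hA₂ : ∀ e ∈ A₂, D.tail e ∉ X ∧ D.head e ∉ X) :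
    ∃ S : Set D.E, D.IsDirectedBond S ∧ A₁ ∪ A₂ ⊆ S := by
  open MultiDigraph in
  by_contra hcon
  have hX : D.IsInClosed X := fun e he => not_not.1 fun ht => hdircut e ⟨ht, he⟩
  have hmix : ∀ B ⊆ A₁ ∪ A₂, D.MixedAcyclic B :=
    fun B => mixedAcyclic_of_subset_union hf₁ hf₂ hac₁ hac₂ hX hA₁ hA₂
  have hnonloop : ∀ a ∈ A₁ ∪ A₂, D.tail a ≠ D.head a :=
    fun a ha => ha.elim (hf₁.tail_ne_head ·) (hf₂.tail_ne_head ·)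
  obtain ⟨a₁, ha₁⟩ := h₁
  obtain ⟨a₂, ha₂⟩ := h₂
  obtain ⟨ψ, hψ₁, hψ₂⟩ := h.exists_oddOnDibondsAvoiding_of_mixedAcyclic (hmix _ subset_rfl)
    ha₁ ha₂ (hnonloop _ (.inl ha₁)) (hnonloop _ (.inr ha₂))
  refine h.1 (hasOddDijoin_of_oddOnDibondsAvoiding_empty (ψ := ψ) fun β hβ _ => ?_)
  obtain ⟨a, ha, haβ⟩ := Set.not_subset.1 fun hsub => hcon ⟨β, hβ, hsub⟩
  obtain ⟨φ, hφ⟩ := h.exists_oddOnDibondsAvoiding (hnonloop a ha)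
  have hψφ := sup_le
    (dibondSpan_le_eqLocus (hψ₁.mono Set.subset_union_left) (hφ.mono Set.subset_union_right))
    (dibondSpan_le_eqLocus (hψ₂.mono Set.subset_union_left) (hφ.mono Set.subset_union_right))
    (eindicator_mem_dibondSpan_sup hA₁ hA₂ hmix hβ ha haβ)
  exact hψφ.trans (hφ β hβ (Set.disjoint_singleton_right.2 haβ))

theorem stmt13 (D : MultiDigraph) (h : MinimalObstruction D)
    (A₁ A₂ : Set D.E) (h₁ : A₁.Nonempty) (h₂ : A₂.Nonempty)
    (hf₁ : D.IsForestOn A₁) (hf₂ : D.IsForestOn A₂)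
    (hac₁ : (D.contract A₁).Acyclic) (hac₂ : (D.contract A₂).Acyclic)
    (X : Set D.V) (hne : (D.cutAt X).Nonempty)
    (hdircut : ∀ e : D.E, ¬(D.tail e ∉ X ∧ D.head e ∈ X))
    (hA₁ : ∀ e ∈ A₁, D.tail e ∈ X ∧ D.head e ∈ X)
    (hA₂ : ∀ e ∈ A₂, D.tail e ∉ X ∧ D.head e ∉ X) :
    ∃ S : Set D.E, D.IsDirectedBond S ∧ A₁ ∪ A₂ ⊆ S :=
  stmt13_general D h A₁ A₂ h₁ h₂ hf₁ hf₂ hac₁ hac₂ X hdircut hA₁ hA₂
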